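/- Let s be an element of a unital C*-algebra with -1 < Im s < 1. Then for ε ∈ {1,-1}, the element Ψ(s)^ε = ((s + εi)(s - εi)⁻¹)^ε is well defined and satisfies ‖Ψ(s)^ε‖ ≤ 1 + 2·max{‖(1 - Im s)⁻¹‖, ‖(1 + Im s)⁻¹‖}. -/

import Mathlib

open Complex

/-- The imaginary part `Im s = (s - s*)/(2i)` of an element of a complex star algebra. -/
noncomputable def imPart {A : Type*} [Ring A] [StarRing A] [Module ℂ A] (s : A) : A :=
  ((2 * Complex.I)⁻¹ : ℂ) • (s - star s)

/-!
Write `s = a + i b` with `a = Re s` and `b = Im s` selfadjoint. Then `s + i = a + i (1 + b)` and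
`s - i = (a + i (1 - b))*`, and for selfadjoint `x` and strictly positive `y` the element `x + i y`
factors as `√y (c + i) √y` with `c = √y⁻¹ x √y⁻¹` selfadjoint. Since
`(c + i)* (c + i) = c² + 1 ≥ 1`, the inverse of `c + i` has norm at most `1`, so
`‖(x + i y)⁻¹‖ ≤ ‖√y⁻¹‖² = ‖y⁻¹‖`. Finally
`Ψ(s)^{±1} = 1 ± 2i (s ∓ i)⁻¹`.
-/

open ComplexStarModule Ring CFC

lemma imPart_eq_imaginaryPart {A : Type*} [Ring A] [StarRing A] [Module ℂ A] [StarModule ℂ A]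
    (s : A) : imPart s = ℑ s := by
  rw [imPart, imaginaryPart_apply_coe, ← Complex.coe_smul, smul_smul, mul_inv, inv_I]
  congr 1
  push_cast
  ring

lemma add_I_smul_one_eq {A : Type*} [Ring A] [StarRing A] [Module ℂ A] [StarModule ℂ A]
    (s : A) : s + I • 1 = ℜ s + I • (1 + ℑ s : A) := by
  conv_lhs => rw [← realPart_add_I_smul_imaginaryPart s]
  module

lemma sub_I_smul_one_eq_star {A : Type*} [Ring A] [StarRing A] [Module ℂ A]
    [StarModule ℂ A] (s : A) : s - I • 1 = star (ℜ s + I • (1 - ℑ s : A)) := by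
  rw [star_add, star_smul, star_sub, star_one, (ℜ s).2.star_eq, (ℑ s).2.star_eq,
    Complex.star_def, Complex.conj_I]
  conv_lhs => rw [← realPart_add_I_smul_imaginaryPart s]
  module

lemma CStarRing.norm_one_le {A : Type*} [NormedRing A] [StarRing A] [CStarRing A] :
    ‖(1 : A)‖ ≤ 1 := by
  rcases subsingleton_or_nontrivial A with _ | _
  · simp [Subsingleton.elim (1 : A) 0]
  · exact CStarRing.norm_one.le

lemma norm_add_smul_one_mul_ringInverse_sub_smul_one_le {A : Type*} [NormedRing A] [StarRing A]
    [CStarRing A] [NormedAlgebra ℂ A] (a : A) (z : ℂ) (h : IsUnit (a - z • 1)) :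
    ‖(a + z • 1) * (a - z • 1)⁻¹ʳ‖ ≤ 1 + 2 * ‖z‖ * ‖(a - z • 1)⁻¹ʳ‖ := by
  have hsplit : a + z • 1 = a - z • 1 + (2 * z) • 1 := by module
  rw [hsplit, add_mul, mul_inverse_cancel _ h, smul_mul_assoc, one_mul]
  calc ‖1 + (2 * z) • (a - z • 1)⁻¹ʳ‖ ≤ ‖(1 : A)‖ + ‖(2 * z) • (a - z • 1)⁻¹ʳ‖ := norm_add_le _ _
    _ ≤ 1 + 2 * ‖z‖ * ‖(a - z • 1)⁻¹ʳ‖ := by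
      rw [norm_smul, norm_mul, Complex.norm_two]
      gcongr
      exact CStarRing.norm_one_le

lemma add_I_smul_eq_mul_conj_add_I_smul_one_mul {A : Type*} [Ring A] [Algebra ℂ A] {r y : A}
    (hr : IsUnit r) (hy : r * r = y) (x : A) :
    x + I • y = r * (r⁻¹ʳ * x * r⁻¹ʳ + I • 1) * r := by
  rw [mul_add, add_mul, mul_smul_comm, mul_one, smul_mul_assoc, hy, ← mul_assoc, ← mul_assoc,
    mul_inverse_cancel r hr, one_mul, mul_assoc, inverse_mul_cancel r hr, mul_one]

section CStarAlgebra

variable {A : Type*} [CStarAlgebra A]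

lemma IsSelfAdjoint.isUnit_add_I_smul_one {c : A} (hc : IsSelfAdjoint c) :
    IsUnit (c + I • 1) := by
  have h : -I ∉ spectrum ℂ c := fun h ↦ by simpa using hc.mem_spectrum_eq_re h
  rw [spectrum.mem_iff, not_not, Algebra.algebraMap_eq_smul_one] at h
  convert h.neg using 1
  rw [neg_sub, neg_smul, sub_neg_eq_add]

lemma IsSelfAdjoint.star_add_I_smul_one_mul_self {c : A} (hc : IsSelfAdjoint c) :
    star (c + I • 1) * (c + I • 1) = c * c + 1 := by
  rw [star_add, hc.star_eq, star_smul, star_one, Complex.star_def, Complex.conj_I]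
  simp only [add_mul, mul_add, smul_mul_assoc, mul_smul_comm, one_mul, mul_one]
  match_scalars <;> simp

variable [PartialOrder A] [StarOrderedRing A]

lemma norm_ringInverse_le_one_of_one_le {b : A} (hb : 1 ≤ b) : ‖b⁻¹ʳ‖ ≤ 1 := by
  have hb' : IsStrictlyPositive b := isStrictlyPositive_one.of_le hb
  rw [CStarAlgebra.norm_le_one_iff_of_nonneg _ hb'.ringInverse.nonneg]
  simpa using CStarAlgebra.ringInverse_le_ringInverse hb

lemma IsSelfAdjoint.norm_ringInverse_add_I_smul_one_le_one {c : A} (hc : IsSelfAdjoint c) :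
    ‖(c + I • 1)⁻¹ʳ‖ ≤ 1 := by
  set u := c + I • 1
  have hsq : ‖u⁻¹ʳ‖ * ‖u⁻¹ʳ‖ = ‖(c * c + 1)⁻¹ʳ‖ := by
    rw [← CStarRing.norm_self_mul_star, ← inverse_star,
      ← inverse_mul (.inr hc.isUnit_add_I_smul_one), hc.star_add_I_smul_one_mul_self]
  have hle : ‖(c * c + 1)⁻¹ʳ‖ ≤ 1 :=
    norm_ringInverse_le_one_of_one_le (le_add_of_nonneg_left hc.mul_self_nonneg)
  nlinarith [norm_nonneg u⁻¹ʳ]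

lemma IsSelfAdjoint.isUnit_add_I_smul {x y : A} (hx : IsSelfAdjoint x)
    (hy : IsStrictlyPositive y) : IsUnit (x + I • y) := by
  have hr : IsUnit (sqrt y) := hy.isUnit_cfcSqrt
  have hc : IsSelfAdjoint ((sqrt y)⁻¹ʳ * x * (sqrt y)⁻¹ʳ) :=
    hx.conjugate_self (sqrt_nonneg y).isSelfAdjoint.ringInverse
  rw [add_I_smul_eq_mul_conj_add_I_smul_one_mul hr (sqrt_mul_sqrt_self y hy.nonneg) x]
  exact (hr.mul hc.isUnit_add_I_smul_one).mul hr

lemma IsSelfAdjoint.norm_ringInverse_add_I_smul_le {x y : A} (hx : IsSelfAdjoint x)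
    (hy : IsStrictlyPositive y) : ‖(x + I • y)⁻¹ʳ‖ ≤ ‖y⁻¹ʳ‖ := by
  set r := sqrt y
  have hr : IsUnit r := hy.isUnit_cfcSqrt
  have hrr : r * r = y := sqrt_mul_sqrt_self y hy.nonneg
  set t := r⁻¹ʳ
  have ht : IsSelfAdjoint t := (sqrt_nonneg y).isSelfAdjoint.ringInverse
  have hc : IsSelfAdjoint (t * x * t) := hx.conjugate_self ht
  have hinv : (x + I • y)⁻¹ʳ = t * (t * x * t + I • 1)⁻¹ʳ * t := by
    rw [add_I_smul_eq_mul_conj_add_I_smul_one_mul hr hrr x,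
      inverse_mul (.inl (hr.mul hc.isUnit_add_I_smul_one)), inverse_mul (.inl hr), ← mul_assoc]
  have htt : ‖t‖ * ‖t‖ = ‖y⁻¹ʳ‖ := by
    rw [← CStarRing.norm_self_mul_star, ht.star_eq, ← inverse_mul (.inl hr), hrr]
  calc ‖(x + I • y)⁻¹ʳ‖ ≤ ‖t‖ * ‖(t * x * t + I • 1)⁻¹ʳ‖ * ‖t‖ := hinv ▸ norm_mul₃_le
    _ ≤ ‖t‖ * 1 * ‖t‖ := by gcongr; exact hc.norm_ringInverse_add_I_smul_one_le_one
    _ = ‖y⁻¹ʳ‖ := by rw [mul_one, htt]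

variable {s : A}

lemma isUnit_add_I_smul_one_of_isStrictlyPositive (hs : IsStrictlyPositive (1 + ℑ s : A)) :
    IsUnit (s + I • 1) :=
  add_I_smul_one_eq s ▸ (ℜ s).2.isUnit_add_I_smul hs

lemma norm_ringInverse_add_I_smul_one_le_of_isStrictlyPositive
    (hs : IsStrictlyPositive (1 + ℑ s : A)) : ‖(s + I • 1)⁻¹ʳ‖ ≤ ‖(1 + ℑ s : A)⁻¹ʳ‖ :=
  add_I_smul_one_eq s ▸ (ℜ s).2.norm_ringInverse_add_I_smul_le hs

lemma isUnit_sub_I_smul_one_of_isStrictlyPositive (hs : IsStrictlyPositive (1 - ℑ s : A)) :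
    IsUnit (s - I • 1) :=
  sub_I_smul_one_eq_star s ▸ ((ℜ s).2.isUnit_add_I_smul hs).star

lemma norm_ringInverse_sub_I_smul_one_le_of_isStrictlyPositive
    (hs : IsStrictlyPositive (1 - ℑ s : A)) : ‖(s - I • 1)⁻¹ʳ‖ ≤ ‖(1 - ℑ s : A)⁻¹ʳ‖ := by
  rw [sub_I_smul_one_eq_star, inverse_star, norm_star]
  exact (ℜ s).2.norm_ringInverse_add_I_smul_le hs

end CStarAlgebra

/-- For `s` in a unital C*-algebra with `-1 < Im s < 1`, the Cayley transforms
`Ψ(s) = (s+i)(s-i)⁻¹` and `Ψ(s)⁻¹ = (s-i)(s+i)⁻¹` are well defined and both satisfy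
`‖Ψ(s)^ε‖ ≤ 1 + 2·max{‖(1-Im s)⁻¹‖, ‖(1+Im s)⁻¹‖}` for `ε ∈ {±1}`. -/
theorem cayley_norm_bound
    {A : Type*} [NormedRing A] [StarRing A] [CStarRing A] [NormedAlgebra ℂ A]
    [CompleteSpace A] [StarModule ℂ A] [PartialOrder A] [StarOrderedRing A]
    (s : A)
    (h₁pos : 0 ≤ (1 : A) + imPart s) (h₁ : IsUnit ((1 : A) + imPart s))
    (h₂pos : 0 ≤ (1 : A) - imPart s) (h₂ : IsUnit ((1 : A) - imPart s)) :
    IsUnit (s + Complex.I • (1 : A)) ∧ IsUnit (s - Complex.I • (1 : A)) ∧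
    ‖(s + Complex.I • (1 : A)) * Ring.inverse (s - Complex.I • (1 : A))‖ ≤
      1 + 2 * max ‖Ring.inverse ((1 : A) - imPart s)‖ ‖Ring.inverse ((1 : A) + imPart s)‖ ∧
    ‖(s - Complex.I • (1 : A)) * Ring.inverse (s + Complex.I • (1 : A))‖ ≤
      1 + 2 * max ‖Ring.inverse ((1 : A) - imPart s)‖ ‖Ring.inverse ((1 : A) + imPart s)‖ := by
  let : CStarAlgebra A := ⟨⟩
  simp only [imPart_eq_imaginaryPart] at h₁pos h₁ h₂pos h₂ ⊢
  have hy₁ : IsStrictlyPositive (1 + ℑ s : A) := h₁.isStrictlyPositive h₁pos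
  have hy₂ : IsStrictlyPositive (1 - ℑ s : A) := h₂.isStrictlyPositive h₂pos
  have hu₂ := isUnit_sub_I_smul_one_of_isStrictlyPositive hy₂
  refine ⟨isUnit_add_I_smul_one_of_isStrictlyPositive hy₁, hu₂, ?_, ?_⟩
  · calc _ ≤ 1 + 2 * ‖I‖ * ‖(s - I • 1)⁻¹ʳ‖ :=
          norm_add_smul_one_mul_ringInverse_sub_smul_one_le s I hu₂
      _ ≤ _ := by
          rw [norm_I, mul_one]
          gcongr
          exact le_max_of_le_left (norm_ringInverse_sub_I_smul_one_le_of_isStrictlyPositive hy₂)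
  · have h := norm_add_smul_one_mul_ringInverse_sub_smul_one_le s (-I)
      (by simpa using isUnit_add_I_smul_one_of_isStrictlyPositive hy₁)
    rw [neg_smul, sub_neg_eq_add, ← sub_eq_add_neg, norm_neg, norm_I, mul_one] at h
    refine h.trans ?_
    gcongr
    exact le_max_of_le_right (norm_ringInverse_add_I_smul_one_le_of_isStrictlyPositive hy₁)
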